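/- Let λ be a nonzero l-regular partition with e_l(λ) ≤ l, and let μ = (λ_1, λ_1, …, λ_1) be the rectangular partition with ℓ(λ) parts all equal to λ_1. Then every node B = (i, j) of the skew diagram [μ] \ [λ] (i.e. with 1 ≤ i ≤ ℓ(λ) and λ_i < j ≤ λ_1) has residue different from the residue of the node (1, λ_1); that is, j − i is not congruent to λ_1 − 1 modulo l. -/

import Mathlib

noncomputable section

/-- `p : ℕ → ℕ` represents the partition `λ` with `p i = λ_{i+1}` (0-indexed parts):
a weakly decreasing, eventually zero sequence. -/
def IsPartition (p : ℕ → ℕ) : Prop :=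
  (∀ i j, i ≤ j → p j ≤ p i) ∧ ∃ N, ∀ i, N ≤ i → p i = 0

/-- `ℓ(λ)`, the number of nonzero parts. -/
def plen (p : ℕ → ℕ) : ℕ := sInf {N | p N = 0}

/-- the degree (number of boxes) of the partition. -/
def pdeg (p : ℕ → ℕ) : ℕ := ∑ i ∈ Finset.range (plen p), p i

/-- `λ` is `l`-regular: no `l` consecutive parts are equal and nonzero. -/
def IsLRegular (l : ℕ) (p : ℕ → ℕ) : Prop :=
  ∀ i, p i ≠ 0 → p (i + l - 1) ≠ p i

/-- `λ` is `l`-restricted: `λ_i - λ_{i+1} < l` for all `i`. -/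
def IsLRestricted (l : ℕ) (p : ℕ → ℕ) : Prop :=
  ∀ i, p i - p (i + 1) < l

/-- the transpose (conjugate) partition. -/
def conjP (p : ℕ → ℕ) : ℕ → ℕ :=
  fun j => ((Finset.range (plen p)).filter fun i => j < p i).card

/-- the minimal `h ≥ 1` with `λ_1 - λ_{h+1} + h ≥ l`: when `e(λ) > l`, the first
`l`-segment of the `l`-edge lies in rows `1, …, h`. -/
def firstSeg (l : ℕ) (p : ℕ → ℕ) : ℕ := sInf {h | 1 ≤ h ∧ l ≤ p 0 - p h + h}

/-- removal of the `l`-edge (with fuel): if `e(λ) ≤ l` the whole edge is removed,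
otherwise the first `l`-segment is removed from rows `1, …, h` (`h = firstSeg`) and one
recurses on `(λ_{h+1}, λ_{h+2}, …)`. -/
def removeLEdgeAux (l : ℕ) : ℕ → (ℕ → ℕ) → ℕ → ℕ
  | 0, _ => fun _ => 0
  | n + 1, p =>
    if p 0 = 0 then fun _ => 0
    else if p 0 + plen p - 1 ≤ l then fun i => p (i + 1) - 1
    else fun i =>
      if i + 1 < firstSeg l p then p (i + 1) - 1
      else if i + 1 = firstSeg l p then p 0 + firstSeg l p - 1 - l
      else removeLEdgeAux l n (fun j => p (j + firstSeg l p)) (i - firstSeg l p)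

/-- the partition obtained by removing the `l`-edge of `λ`. -/
def removeLEdge (l : ℕ) (p : ℕ → ℕ) : ℕ → ℕ := removeLEdgeAux l (plen p) p

/-- `e_l(λ)`, the number of nodes of the `l`-edge. -/
def elen (l : ℕ) (p : ℕ → ℕ) : ℕ := pdeg p - pdeg (removeLEdge l p)

/-- the length of `Mull(λ)` prescribed by the defining recursion of the Mullineux map. -/
def mullLen (l : ℕ) (p : ℕ → ℕ) : ℕ :=
  if l ∣ elen l p then elen l p - plen p else elen l p - plen p + 1

/-- the Mullineux map (with fuel): `Mull(0) = 0` and, for `λ ≠ 0` `l`-regular with `ν`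
obtained from `λ` by removing the `l`-edge, `Mull(λ)` is the unique `l`-regular partition
whose `l`-edge removal leaves `Mull(ν)` and whose length is `e_l(λ) - ℓ(λ)` if
`l ∣ e_l(λ)` and `e_l(λ) - ℓ(λ) + 1` otherwise. -/
def mullAux (l : ℕ) : ℕ → (ℕ → ℕ) → ℕ → ℕ
  | 0, _ => fun _ => 0
  | n + 1, p =>
    if p 0 = 0 then fun _ => 0
    else
      Classical.epsilon fun μ : ℕ → ℕ =>
        IsPartition μ ∧ IsLRegular l μ ∧
          removeLEdge l μ = mullAux l n (removeLEdge l p) ∧ plen μ = mullLen l p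

/-- the Mullineux map. -/
def mull (l : ℕ) (p : ℕ → ℕ) : ℕ → ℕ := mullAux l (pdeg p) p

/-- the list of Mullineux components (with fuel). -/
def mullCompsAux (l : ℕ) : ℕ → (ℕ → ℕ) → List (ℕ → ℕ)
  | 0, _ => []
  | n + 1, p =>
    if p 0 = 0 then []
    else if elen l p ≤ l then [p]
    else (fun i => if i < firstSeg l p then p i else 0) ::
      mullCompsAux l n (fun j => p (j + firstSeg l p))

/-- the Mullineux components of `λ`. -/
def mullComps (l : ℕ) (p : ℕ → ℕ) : List (ℕ → ℕ) := mullCompsAux l (plen p) p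

/-- edge `l`-connectedness (with fuel): consecutive Mullineux components `α, ρ` satisfy
`α_1 - ρ_1 + ℓ(α) = l`. -/
def edgeConnAux (l : ℕ) : ℕ → (ℕ → ℕ) → Prop
  | 0, _ => True
  | n + 1, p =>
    if elen l p ≤ l then True
    else p 0 + firstSeg l p = l + p (firstSeg l p) ∧
      edgeConnAux l n fun j => p (j + firstSeg l p)

/-- `λ` is edge `l`-connected. -/
def EdgeLConnected (l : ℕ) (p : ℕ → ℕ) : Prop := edgeConnAux l (plen p) p

/-- the node `(i+1, λ_{i+1})` (in row `i+1`, 1-indexed) is a removable node. -/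
def Removable (p : ℕ → ℕ) (i : ℕ) : Prop := p (i + 1) < p i

/-- removal of the removable node in row `i+1`. -/
def removeNode (p : ℕ → ℕ) (i : ℕ) : ℕ → ℕ := fun k => if k = i then p i - 1 else p k

/-- there is an addable node `(i+1, λ_{i+1} + 1)` in row `i+1` (1-indexed). -/
def Addable (p : ℕ → ℕ) (i : ℕ) : Prop := i ≤ plen p ∧ (i = 0 ∨ p i < p (i - 1))

/-- the removable node in row `i+1` is suitable: its residue (mod `l`) differs from the
residue of every lower addable node. -/
def Suitable (l : ℕ) (p : ℕ → ℕ) (i : ℕ) : Prop :=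
  Removable p i ∧ ∀ j, i < j → Addable p j →
    ¬ ((p j : ℤ) - (j : ℤ) ≡ (p i : ℤ) - (i : ℤ) - 1 [ZMOD (l : ℤ)])

/-- the removable node in row `i+1` is co-suitable: its transpose node is a suitable
node of the transpose partition. -/
def CoSuitable (l : ℕ) (p : ℕ → ℕ) (i : ℕ) : Prop :=
  Removable p i ∧ Suitable l (conjP p) (p i - 1)

/-- `Φ_m`: partitions with at most `m` parts and `λ_1 - λ_m ≤ l - m`. -/
def Phi (l m : ℕ) : Set (ℕ → ℕ) :=
  {p | IsPartition p ∧ plen p ≤ m ∧ p 0 - p (m - 1) ≤ l - m}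

/-- `λ` is `m`-distinguished: `λ = λ⁰ + lλ̄` with
`λ⁰ = ((l-m)^k, a_1, …, a_m)`, `l - m > a_1 ≥ … ≥ a_m ≥ 0`, and `λ̄` a partition with
`λ̄_1 ≤ m - 1`. -/
def IsDistinguished (l m : ℕ) (p : ℕ → ℕ) : Prop :=
  ∃ (k : ℕ) (a : ℕ → ℕ) (pb : ℕ → ℕ),
    IsPartition pb ∧ pb 0 < m ∧
    (∀ i j, i ≤ j → a j ≤ a i) ∧ a 0 < l - m ∧ (∀ i, m ≤ i → a i = 0) ∧
    ∀ i, p i = (if i < k then l - m else a (i - k)) + l * pb i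

/-- `q` is obtained from `p` by removing a skew `l`-hook (spanning rows `a+1, …, b+1`,
1-indexed). -/
def IsHookRemoval (l : ℕ) (p q : ℕ → ℕ) : Prop :=
  IsPartition q ∧ ∃ a b : ℕ, a ≤ b ∧
    (∀ i, i < a → q i = p i) ∧
    (∀ i, a ≤ i → i < b → q i + 1 = p (i + 1)) ∧
    q b + l = p a + (b - a) ∧
    ∀ i, b < i → q i = p i

/-- `q` is the `l`-core of `p`: obtained by repeatedly removing skew `l`-hooks until
none remain. -/
def IsCoreOf (l : ℕ) (p q : ℕ → ℕ) : Prop :=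
  Relation.ReflTransGen (fun x y => IsHookRemoval l x y) p q ∧ ∀ r, ¬ IsHookRemoval l q r

/-- the `l`-core of `p`. -/
def lCore (l : ℕ) (p : ℕ → ℕ) : ℕ → ℕ := Classical.epsilon (IsCoreOf l p)


/-!
Put `k = i - 1 ≥ 1`. The residue gap `(λ_1 - 1) - (j - i)` is positive and at most
`λ_1 - λ_{k+1} + k - 1`, so it suffices that `λ_1 - λ_{k+1} + k < l` for every row `k + 1 ≤ ℓ(λ)`.
When `e(λ) ≤ l` this is immediate. Otherwise rows above the row `h` of the first `l`-segment
satisfy it by the minimality of `h`, while `h < ℓ(λ)` is impossible: the first segment has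
exactly `l` nodes and the rest of the `l`-edge meets row `h + 1`, so `e_l(λ) > l`.
-/

theorem IsPartition.antitone {p : ℕ → ℕ} (hp : IsPartition p) : Antitone p :=
  fun _ _ h => hp.1 _ _ h

theorem IsPartition.apply_plen {p : ℕ → ℕ} (hp : IsPartition p) : p (plen p) = 0 :=
  Nat.sInf_mem (hp.2.elim fun N hN => ⟨N, hN N le_rfl⟩)

theorem apply_ne_zero_of_lt_plen {p : ℕ → ℕ} {k : ℕ} (hk : k < plen p) : p k ≠ 0 :=
  Nat.notMem_of_lt_sInf (s := {N | p N = 0}) hk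

theorem plen_le_of_apply_eq_zero {p : ℕ → ℕ} {N : ℕ} (hN : p N = 0) : plen p ≤ N :=
  Nat.sInf_le hN

theorem IsPartition.plen_pos {p : ℕ → ℕ} (hp : IsPartition p) (hne : p 0 ≠ 0) :
    0 < plen p :=
  Nat.pos_of_ne_zero fun h => hne (h ▸ hp.apply_plen)

theorem IsPartition.firstSeg_spec (l : ℕ) {p : ℕ → ℕ} (hp : IsPartition p) :
    1 ≤ firstSeg l p ∧ l ≤ p 0 - p (firstSeg l p) + firstSeg l p := by
  refine Nat.sInf_mem (s := {h | 1 ≤ h ∧ l ≤ p 0 - p h + h}) ⟨plen p + l + 1, by omega, ?_⟩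
  have : p (plen p + l + 1) = 0 :=
    Nat.le_zero.mp (hp.apply_plen ▸ hp.antitone (by omega))
  omega

theorem sub_add_lt_of_lt_firstSeg {l : ℕ} {p : ℕ → ℕ} {k : ℕ} (hk1 : 1 ≤ k)
    (hk : k < firstSeg l p) : p 0 - p k + k < l := by
  have : ¬ (1 ≤ k ∧ l ≤ p 0 - p k + k) := Nat.notMem_of_lt_sInf hk
  omega

theorem removeLEdgeAux_le (l : ℕ) :
    ∀ (n : ℕ) {p : ℕ → ℕ}, Antitone p → ∀ i, removeLEdgeAux l n p i ≤ p i
  | 0, _, _, _ => Nat.zero_le _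
  | n + 1, p, hp, i => by
    have hsucc : p (i + 1) - 1 ≤ p i := (Nat.sub_le _ _).trans (hp (Nat.le_succ i))
    simp only [removeLEdgeAux]
    split_ifs with h0 he
    · exact Nat.zero_le _
    · exact hsucc
    dsimp only
    split_ifs with hlt heq
    · exact hsucc
    · have hpi : p i ≤ p 0 := hp (Nat.zero_le i)
      rcases Nat.eq_zero_or_pos i with rfl | hi
      · omega
      · have := sub_add_lt_of_lt_firstSeg (l := l) (p := p) hi (by omega)
        omega
    · have := removeLEdgeAux_le l n (p := fun j => p (j + firstSeg l p))
        (fun a b hab => hp (by omega)) (i - firstSeg l p)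
      rwa [Nat.sub_add_cancel (by omega)] at this

theorem removeLEdgeAux_zero_lt {l : ℕ} (hl : 1 ≤ l) :
    ∀ (n : ℕ) {p : ℕ → ℕ}, Antitone p → p 0 ≠ 0 → removeLEdgeAux l n p 0 < p 0
  | 0, _, _, hne => Nat.pos_of_ne_zero hne
  | n + 1, p, hp, hne => by
    have h10 : p (0 + 1) ≤ p 0 := hp zero_le_one
    have h0 : 0 < p 0 := Nat.pos_of_ne_zero hne
    simp only [removeLEdgeAux, if_neg hne]
    split_ifs with he
    · dsimp only; omega
    dsimp only
    split_ifs with hlt heq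
    · omega
    · omega
    · have hfs : firstSeg l p = 0 := by omega
      simpa [hfs] using removeLEdgeAux_zero_lt hl n (p := fun j => p (j + firstSeg l p))
        (fun a b hab => hp (by omega)) (by simpa [hfs] using hne)

theorem removeLEdge_apply_of_lt_edge {l : ℕ} {p : ℕ → ℕ} (hp : IsPartition p)
    (hne : p 0 ≠ 0) (he : l < p 0 + plen p - 1) (i : ℕ) :
    removeLEdge l p i =
      if i + 1 < firstSeg l p then p (i + 1) - 1
      else if i + 1 = firstSeg l p then p 0 + firstSeg l p - 1 - l
      else removeLEdgeAux l (plen p - 1) (fun j => p (j + firstSeg l p)) (i - firstSeg l p) := by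
  obtain ⟨m, hm⟩ := Nat.exists_eq_add_one_of_ne_zero (hp.plen_pos hne).ne'
  rw [removeLEdge, hm, removeLEdgeAux, if_neg hne, if_neg (by omega), Nat.add_sub_cancel]

open Finset in
theorem sum_range_firstSeg_removeLEdge_add {l : ℕ} {p : ℕ → ℕ} (hp : IsPartition p)
    (hne : p 0 ≠ 0) (he : l < p 0 + plen p - 1) (hfs : firstSeg l p < plen p) :
    ∑ i ∈ range (firstSeg l p), removeLEdge l p i + l = ∑ i ∈ range (firstSeg l p), p i := by
  obtain ⟨hfs1, hfsl⟩ := hp.firstSeg_spec l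
  obtain ⟨g, hg⟩ := Nat.exists_eq_add_one_of_ne_zero (show firstSeg l p ≠ 0 by omega)
  have hrows : ∑ i ∈ range g, (removeLEdge l p i + 1) = ∑ i ∈ range g, p (i + 1) := by
    refine sum_congr rfl fun i hi => ?_
    have hig := mem_range.mp hi
    have := apply_ne_zero_of_lt_plen (p := p) (k := i + 1) (by omega)
    rw [removeLEdge_apply_of_lt_edge hp hne he, if_pos (by omega)]
    omega
  have hlast : removeLEdge l p g = p 0 + firstSeg l p - 1 - l := by
    rw [removeLEdge_apply_of_lt_edge hp hne he, if_neg (by omega), if_pos (by omega)]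
  have hph : p (firstSeg l p) ≤ p 0 := hp.antitone (Nat.zero_le _)
  have := apply_ne_zero_of_lt_plen hfs
  rw [sum_add_distrib, sum_const, card_range, smul_eq_mul, mul_one] at hrows
  rw [hg, sum_range_succ, sum_range_succ', hlast]
  omega

open Finset in
theorem pdeg_add_le_of_sum_range_add_le {p q : ℕ → ℕ} (hp : IsPartition p)
    (hqp : ∀ i, q i ≤ p i) {m s : ℕ} (hm : m ≤ plen p)
    (hs : ∑ i ∈ range m, q i + s ≤ ∑ i ∈ range m, p i) : pdeg q + s ≤ pdeg p := by
  have hplen : plen q ≤ plen p :=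
    plen_le_of_apply_eq_zero (Nat.le_zero.mp (hp.apply_plen ▸ hqp (plen p)))
  have hq : pdeg q ≤ ∑ i ∈ range (plen p), q i :=
    sum_le_sum_of_subset (range_subset_range.mpr hplen)
  have htail : ∑ i ∈ Ico m (plen p), q i ≤ ∑ i ∈ Ico m (plen p), p i :=
    sum_le_sum fun i _ => hqp i
  have hsplit : pdeg p = ∑ i ∈ range m, p i + ∑ i ∈ Ico m (plen p), p i :=
    (sum_range_add_sum_Ico _ hm).symm
  rw [← sum_range_add_sum_Ico _ hm] at hq
  omega

theorem lt_elen_of_firstSeg_lt_plen {l : ℕ} (hl : 1 ≤ l) {p : ℕ → ℕ} (hp : IsPartition p)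
    (hne : p 0 ≠ 0) (he : l < p 0 + plen p - 1) (hfs : firstSeg l p < plen p) :
    l < elen l p := by
  have hrow : removeLEdge l p (firstSeg l p) < p (firstSeg l p) := by
    rw [removeLEdge_apply_of_lt_edge hp hne he, if_neg (by omega), if_neg (by omega),
      Nat.sub_self]
    simpa using removeLEdgeAux_zero_lt hl (plen p - 1) (p := fun j => p (j + firstSeg l p))
      (fun a b hab => hp.antitone (by omega)) (by simpa using apply_ne_zero_of_lt_plen hfs)
  have hhead : ∑ i ∈ Finset.range (firstSeg l p + 1), removeLEdge l p i + (l + 1) ≤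
      ∑ i ∈ Finset.range (firstSeg l p + 1), p i := by
    have := sum_range_firstSeg_removeLEdge_add hp hne he hfs
    rw [Finset.sum_range_succ, Finset.sum_range_succ]
    omega
  have := pdeg_add_le_of_sum_range_add_le hp (q := removeLEdge l p)
    (removeLEdgeAux_le l _ hp.antitone) hfs hhead
  rw [elen]
  omega

theorem sub_add_lt_of_elen_le {l : ℕ} (hl : 1 ≤ l) {p : ℕ → ℕ} (hp : IsPartition p)
    (hne : p 0 ≠ 0) (hel : elen l p ≤ l) {k : ℕ} (hk1 : 1 ≤ k) (hk : k < plen p) :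
    p 0 - p k + k < l := by
  have hpk := apply_ne_zero_of_lt_plen hk
  by_cases he : p 0 + plen p - 1 ≤ l
  · omega
  by_cases hfs : k < firstSeg l p
  · exact sub_add_lt_of_lt_firstSeg hk1 hfs
  · exact absurd hel (lt_elen_of_firstSeg_lt_plen hl hp hne (by omega) (by omega)).not_ge

theorem residue_of_skew_rectangle_general (l : ℕ) (hl : 2 ≤ l) (p : ℕ → ℕ)
    (hp : IsPartition p) (hne : p 0 ≠ 0)
    (hel : elen l p ≤ l) :
    ∀ i j : ℕ, 1 ≤ i → i ≤ plen p → p (i - 1) < j → j ≤ p 0 →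
      ¬ ((j : ℤ) - (i : ℤ) ≡ (p 0 : ℤ) - 1 [ZMOD (l : ℤ)]) := by
  intro i j hi1 hi hj hj0 hcong
  obtain ⟨k, rfl⟩ := Nat.exists_eq_add_one_of_ne_zero (show i ≠ 0 by omega)
  rw [Nat.add_sub_cancel] at hj
  have hk1 : 1 ≤ k := Nat.one_le_iff_ne_zero.mpr (by rintro rfl; omega)
  have hrow := sub_add_lt_of_elen_le (by omega) hp hne hel hk1 (by omega)
  have hpk : p k ≤ p 0 := hp.antitone (Nat.zero_le k)
  have hgap := Int.le_of_dvd (by omega) hcong.dvd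
  omega

/-- Let `λ` be a nonzero `l`-regular partition with `e_l(λ) ≤ l`, and let
`μ = (λ_1^{ℓ(λ)})` be the enclosing rectangle. Then every node `(i, j)` of the skew
diagram `[μ] \ [λ]` (so `1 ≤ i ≤ ℓ(λ)` and `λ_i < j ≤ λ_1`) has residue different from
the residue `λ_1 - 1` of the node `(1, λ_1)`. -/
theorem residue_of_skew_rectangle (l : ℕ) (hl : 2 ≤ l) (p : ℕ → ℕ)
    (hp : IsPartition p) (hne : p 0 ≠ 0) (hreg : IsLRegular l p)
    (hel : elen l p ≤ l) :
    ∀ i j : ℕ, 1 ≤ i → i ≤ plen p → p (i - 1) < j → j ≤ p 0 →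
      ¬ ((j : ℤ) - (i : ℤ) ≡ (p 0 : ℤ) - 1 [ZMOD (l : ℤ)]) :=
  residue_of_skew_rectangle_general l hl p hp hne hel

end
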